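/- arXiv:1011.4310 — 5 statements merged into one kernel-verified Lean document; each statement's English description precedes it below -/
import Mathlib

section
/- Let ε, η > 0, let μ and ν be non-negative functions on a finite set X, and let ‖·‖ be a norm on ℝ^X with dual norm ‖·‖*. Suppose that ⟨μ − ν, φ₊⟩ ≤ ε whenever ‖φ‖* ≤ η⁻¹, where φ₊ is the pointwise positive part of φ. Then for every function f with 0 ≤ f ≤ μ there exists a function g with 0 ≤ g ≤ ν such that ‖(1+ε)⁻¹ f − g‖ ≤ η. -/
/-- Dense-model transference principle for density theorems.
`N` is a norm on `ℝ^X`; the condition `∀ f, N f ≤ 1 → |⟨f,φ⟩| ≤ η⁻¹` says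
exactly that the dual norm of `φ` is at most `η⁻¹`. -/
theorem stmt_1 {X : Type*} [Fintype X] (ε η : ℝ) (hε : 0 < ε) (hη : 0 < η)
    (μ ν : X → ℝ) (hμ : 0 ≤ μ) (hν : 0 ≤ ν)
    (N : (X → ℝ) → ℝ)
    (hN_add : ∀ f g : X → ℝ, N (f + g) ≤ N f + N g)
    (hN_smul : ∀ (c : ℝ) (f : X → ℝ), N (c • f) = |c| * N f)
    (hN_def : ∀ f : X → ℝ, N f = 0 → f = 0)
    (hcorr : ∀ φ : X → ℝ,
      (∀ f : X → ℝ, N f ≤ 1 →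
        |(∑ x, f x * φ x) / (Fintype.card X : ℝ)| ≤ η⁻¹) →
      (∑ x, (μ x - ν x) * max (φ x) 0) / (Fintype.card X : ℝ) ≤ ε) :
    ∀ f : X → ℝ, 0 ≤ f → f ≤ μ →
      ∃ g : X → ℝ, 0 ≤ g ∧ g ≤ ν ∧ N ((1 + ε)⁻¹ • f - g) ≤ η := by
  classical
  intro f hf0 hfμ
  have hN0 : N (0 : X → ℝ) = 0 := by
    have := hN_smul 0 0
    simpa using this
  have hNneg' : ∀ v : X → ℝ, N (-v) = N v := by
    intro v
    have := hN_smul (-1) v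
    rw [neg_one_smul] at this
    simpa using this
  have hNnonneg : ∀ v : X → ℝ, 0 ≤ N v := by
    intro v
    have h1 := hN_add v (-v)
    rw [add_neg_cancel, hN0, hNneg'] at h1
    linarith
  -- trivial case: X empty
  rcases isEmpty_or_nonempty X with hX | hX
  · refine ⟨0, le_refl _, hν, ?_⟩
    have h0 : ((1 + ε)⁻¹ • f - 0 : X → ℝ) = 0 := Subsingleton.elim _ _
    rw [h0, hN0]
    exact hη.le
  by_contra hcon
  push_neg at hcon
  set h : X → ℝ := (1 + ε)⁻¹ • f with hh
  -- Lipschitz bound and continuity of N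
  have hNsum : ∀ (s : Finset X) (w : X → (X → ℝ)),
      N (∑ x ∈ s, w x) ≤ ∑ x ∈ s, N (w x) := by
    intro s w
    induction s using Finset.induction with
    | empty => simp [hN0]
    | insert _ _ hx ih =>
      rw [Finset.sum_insert hx, Finset.sum_insert hx]
      exact (hN_add _ _).trans (by linarith)
  set e : X → (X → ℝ) := fun x => fun j => if x = j then (1 : ℝ) else 0 with he
  have hC : ∀ v : X → ℝ, N v ≤ (∑ x, N (e x)) * ‖v‖ := by
    intro v
    have hv : v = ∑ x, v x • e x := by
      funext j
      simp [e, Finset.sum_apply, mul_ite, Finset.sum_ite_eq, smul_eq_mul]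
    calc N v = N (∑ x, v x • e x) := by rw [← hv]
      _ ≤ ∑ x, N (v x • e x) := hNsum _ _
      _ = ∑ x, |v x| * N (e x) := by simp [hN_smul]
      _ ≤ ∑ x, ‖v‖ * N (e x) := by
          apply Finset.sum_le_sum
          intro x _
          apply mul_le_mul_of_nonneg_right _ (hNnonneg _)
          calc |v x| = ‖v x‖ := (Real.norm_eq_abs _).symm
            _ ≤ ‖v‖ := norm_le_pi_norm v x
      _ = (∑ x, N (e x)) * ‖v‖ := by
          rw [Finset.sum_mul]
          exact Finset.sum_congr rfl fun x _ => mul_comm _ _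
  have hlipN : ∀ a b : X → ℝ, |N a - N b| ≤ N (a - b) := by
    intro a b
    have h1 := hN_add (a - b) b
    rw [sub_add_cancel] at h1
    have h2 := hN_add (b - a) a
    rw [sub_add_cancel] at h2
    have h3 : N (b - a) = N (a - b) := by rw [← neg_sub, hNneg']
    rw [abs_le]
    constructor <;> linarith
  have hNcont : Continuous N := by
    have hlip : LipschitzWith (Real.toNNReal (∑ x, N (e x))) N := by
      apply LipschitzWith.of_dist_le_mul
      intro a b
      rw [Real.dist_eq, dist_eq_norm]
      calc |N a - N b| ≤ N (a - b) := hlipN a b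
        _ ≤ (∑ x, N (e x)) * ‖a - b‖ := hC _
        _ ≤ _ := by
            apply mul_le_mul_of_nonneg_right _ (norm_nonneg _)
            exact Real.le_coe_toNNReal _
    exact hlip.continuous
  -- the unit ball of N is compact
  set B : Set (X → ℝ) := {v | N v ≤ 1} with hBdef
  have hBclosed : IsClosed B := isClosed_le hNcont continuous_const
  have hsphne : (Metric.sphere (0 : X → ℝ) 1).Nonempty := by
    obtain ⟨x₀⟩ := hX
    refine ⟨Pi.single x₀ 1, ?_⟩
    simp [Pi.norm_single]
  obtain ⟨vm, hvm, hmin⟩ := (isCompact_sphere (0 : X → ℝ) 1).exists_isMinOn hsphne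
    hNcont.continuousOn
  have hvmnorm : ‖vm‖ = 1 := by simpa using mem_sphere_zero_iff_norm.mp hvm
  have hvmne : vm ≠ 0 := by
    intro hv
    rw [hv, norm_zero] at hvmnorm
    norm_num at hvmnorm
  have hcm : 0 < N vm := by
    rcases lt_or_eq_of_le (hNnonneg vm) with h | h
    · exact h
    · exact absurd (hN_def vm h.symm) hvmne
  have hBsub : B ⊆ Metric.closedBall (0 : X → ℝ) (N vm)⁻¹ := by
    intro v hv
    rw [Metric.mem_closedBall, dist_zero_right]
    by_cases hv0 : v = 0
    · rw [hv0, norm_zero]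
      positivity
    · have hnv : (0:ℝ) < ‖v‖ := norm_pos_iff.2 hv0
      have hu : (‖v‖⁻¹ • v) ∈ Metric.sphere (0 : X → ℝ) 1 := by
        rw [mem_sphere_zero_iff_norm, norm_smul, norm_inv, norm_norm,
          inv_mul_cancel₀ hnv.ne']
      have h1 : N vm ≤ N (‖v‖⁻¹ • v) := isMinOn_iff.mp hmin _ hu
      rw [hN_smul, abs_of_pos (inv_pos.2 hnv)] at h1
      have h2 : N vm ≤ ‖v‖⁻¹ := by
        have : ‖v‖⁻¹ * N v ≤ ‖v‖⁻¹ * 1 :=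
          mul_le_mul_of_nonneg_left hv (inv_pos.2 hnv).le
        rw [mul_one] at this
        linarith
      have h3 : N vm * ‖v‖ ≤ 1 := by
        have := mul_le_mul_of_nonneg_right h2 hnv.le
        rwa [inv_mul_cancel₀ hnv.ne'] at this
      have h4 : N vm * (N vm)⁻¹ = 1 := mul_inv_cancel₀ hcm.ne'
      nlinarith
  have hBcpt : IsCompact B :=
    (isCompact_closedBall (0 : X → ℝ) (N vm)⁻¹).of_isClosed_subset hBclosed hBsub
  -- the set K + η B
  set K : Set (X → ℝ) := Set.Icc 0 ν with hKdef
  set s : Set (X → ℝ) :=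
    (fun p : (X → ℝ) × (X → ℝ) => p.1 + η • p.2) '' (K ×ˢ B) with hsdef
  have hscpt : IsCompact s :=
    (isCompact_Icc.prod hBcpt).image (continuous_fst.add (continuous_snd.const_smul η))
  have hsconv : Convex ℝ s := by
    rintro _ ⟨⟨g1, v1⟩, ⟨hg1, hv1⟩, rfl⟩ _ ⟨⟨g2, v2⟩, ⟨hg2, hv2⟩, rfl⟩ a b ha hb hab
    refine ⟨(a • g1 + b • g2, a • v1 + b • v2), ⟨?_, ?_⟩, ?_⟩
    · exact (convex_Icc (0 : X → ℝ) ν) hg1 hg2 ha hb hab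
    · show N (a • v1 + b • v2) ≤ 1
      calc N (a • v1 + b • v2) ≤ N (a • v1) + N (b • v2) := hN_add _ _
        _ = |a| * N v1 + |b| * N v2 := by rw [hN_smul, hN_smul]
        _ ≤ a * 1 + b * 1 := by
            rw [abs_of_nonneg ha, abs_of_nonneg hb]
            gcongr
            · exact hv1
            · exact hv2
        _ = 1 := by rw [mul_one, mul_one, hab]
    · show (a • g1 + b • g2) + η • (a • v1 + b • v2)
        = a • ((g1, v1).1 + η • (g1, v1).2) + b • ((g2, v2).1 + η • (g2, v2).2)
      simp only
      module
  have hhs : h ∉ s := by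
    rintro ⟨⟨g, v⟩, ⟨hg, hv⟩, heq⟩
    have he1 : h - g = η • v := by
      rw [← heq]; module
    have h2 : N (h - g) ≤ η := by
      have hv' : N v ≤ 1 := hv
      rw [he1, hN_smul, abs_of_pos hη]
      nlinarith [hNnonneg v, hv']
    exact absurd h2 (not_le.2 (hcon g hg.1 hg.2))
  obtain ⟨φ', u, hus, huh⟩ := geometric_hahn_banach_closed_point hsconv hscpt.isClosed hhs
  -- u is positive since 0 ∈ s
  have h0B : (0 : X → ℝ) ∈ B := by
    show N 0 ≤ 1
    rw [hN0]; norm_num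
  have h0s : (0 : X → ℝ) ∈ s := ⟨(0, 0), ⟨⟨le_refl _, hν⟩, h0B⟩, by simp⟩
  have hu0 : 0 < u := by
    have := hus 0 h0s
    rwa [map_zero] at this
  -- a maximizer of φ' on B
  obtain ⟨v₀, hv₀B, hmax⟩ := hBcpt.exists_isMaxOn ⟨0, h0B⟩ φ'.continuous.continuousOn
  set D : ℝ := φ' v₀ with hDdef
  have hDpos : 0 < D := by
    have hφh : 0 < φ' h := hu0.trans huh
    have hhne : h ≠ 0 := by
      intro h0
      rw [h0, map_zero] at hφh
      exact lt_irrefl 0 hφh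
    have hNh : 0 < N h := by
      rcases lt_or_eq_of_le (hNnonneg h) with h' | h'
      · exact h'
      · exact absurd (hN_def h h'.symm) hhne
    have hmem : ((N h)⁻¹ • h) ∈ B := by
      show N ((N h)⁻¹ • h) ≤ 1
      rw [hN_smul, abs_of_pos (inv_pos.2 hNh), inv_mul_cancel₀ hNh.ne']
    have := isMaxOn_iff.mp hmax _ hmem
    rw [map_smul, smul_eq_mul] at this
    calc (0:ℝ) < (N h)⁻¹ * φ' h := by positivity
      _ ≤ D := this
  have hsep : ∀ g : X → ℝ, 0 ≤ g → g ≤ ν → φ' g + η * D < φ' h := by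
    intro g hg0 hg1
    have hmem : g + η • v₀ ∈ s := ⟨(g, v₀), ⟨⟨hg0, hg1⟩, hv₀B⟩, rfl⟩
    have := (hus _ hmem).trans huh
    rwa [map_add, map_smul, smul_eq_mul] at this
  -- the dual witness
  set c : ℝ := (η * D)⁻¹ with hcdef
  have hηD : 0 < η * D := mul_pos hη hDpos
  have hcpos : 0 < c := inv_pos.2 hηD
  set φ : X → ℝ :=
    fun x => (Fintype.card X : ℝ) * (c * φ' (fun j => if x = j then (1:ℝ) else 0)) with hφdef
  have hcard : (Fintype.card X : ℝ) ≠ 0 := by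
    exact_mod_cast Fintype.card_ne_zero
  have hrep : ∀ w : X → ℝ, (∑ x, w x * φ x) / (Fintype.card X : ℝ) = c * φ' w := by
    intro w
    have h1 : φ' w = ∑ x, w x * φ' (fun j => if x = j then (1:ℝ) else 0) := by
      simpa [smul_eq_mul] using
        LinearMap.pi_apply_eq_sum_univ (φ' : (X → ℝ) →ₗ[ℝ] ℝ) w
    have h2 : ∑ x, w x * φ x
        = (Fintype.card X : ℝ)
          * (c * ∑ x, w x * φ' (fun j => if x = j then (1:ℝ) else 0)) := by
      rw [Finset.mul_sum, Finset.mul_sum]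
      refine Finset.sum_congr rfl fun x _ => ?_
      simp only [hφdef]
      ring
    rw [h2, mul_div_cancel_left₀ _ hcard, h1]
  have hdual : ∀ w : X → ℝ, N w ≤ 1 →
      |(∑ x, w x * φ x) / (Fintype.card X : ℝ)| ≤ η⁻¹ := by
    intro w hw
    rw [hrep w, abs_mul, abs_of_pos hcpos]
    have h1 : |φ' w| ≤ D := by
      rw [abs_le]
      constructor
      · have hmem : -w ∈ B := by
          show N (-w) ≤ 1
          rwa [hNneg']
        have := isMaxOn_iff.mp hmax _ hmem
        rw [map_neg] at this
        linarith
      · exact isMaxOn_iff.mp hmax _ hw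
    have h2 : c * |φ' w| ≤ c * D := mul_le_mul_of_nonneg_left h1 hcpos.le
    have h3 : c * D = η⁻¹ := by
      rw [hcdef, mul_inv, mul_assoc, inv_mul_cancel₀ hDpos.ne', mul_one]
    linarith
  have hcorr' := hcorr φ hdual
  -- final contradiction
  set P : X → ℝ := fun x => max (φ x) 0 with hPdef
  set gs : X → ℝ := fun x => if 0 < φ x then ν x else 0 with hgsdef
  have hgs0 : (0 : X → ℝ) ≤ gs := by
    intro x
    simp only [hgsdef, Pi.zero_apply]
    split
    · exact hν x
    · exact le_refl 0
  have hgsν : gs ≤ ν := by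
    intro x
    simp only [hgsdef]
    split
    · exact le_refl _
    · exact hν x
  have hsum1 : ∑ x, gs x * φ x = ∑ x, ν x * P x := by
    refine Finset.sum_congr rfl fun x _ => ?_
    simp only [hgsdef, hPdef]
    split
    · next hx => rw [max_eq_left hx.le]
    · next hx => rw [max_eq_right (not_lt.mp hx), mul_zero, zero_mul]
  set A : ℝ := (∑ x, ν x * P x) / (Fintype.card X : ℝ) with hAdef
  have hA0 : 0 ≤ A := by
    apply div_nonneg _ (Nat.cast_nonneg _)
    apply Finset.sum_nonneg
    intro x _
    exact mul_nonneg (hν x) (le_max_right _ _)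
  have hkey : A + 1 < c * φ' h := by
    have h1 := hsep gs hgs0 hgsν
    have h2 : c * (φ' gs + η * D) < c * φ' h := mul_lt_mul_of_pos_left h1 hcpos
    have h3 : c * (η * D) = 1 := inv_mul_cancel₀ hηD.ne'
    have h4 : A = c * φ' gs := by
      rw [hAdef, ← hsum1, hrep gs]
    nlinarith
  have hub : c * φ' h ≤ (1 + ε)⁻¹ * ((∑ x, μ x * P x) / (Fintype.card X : ℝ)) := by
    rw [← hrep h]
    have h1 : ∑ x, h x * φ x ≤ ∑ x, h x * P x := by
      apply Finset.sum_le_sum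
      intro x _
      apply mul_le_mul_of_nonneg_left (le_max_left _ _)
      have : (0:ℝ) ≤ (1 + ε)⁻¹ * f x := by
        apply mul_nonneg _ (hf0 x)
        positivity
      simpa [hh, smul_eq_mul] using this
    have h2 : ∑ x, h x * P x = (1 + ε)⁻¹ * ∑ x, f x * P x := by
      rw [Finset.mul_sum]
      refine Finset.sum_congr rfl fun x _ => ?_
      simp only [hh, Pi.smul_apply, smul_eq_mul]
      ring
    have h3 : ∑ x, f x * P x ≤ ∑ x, μ x * P x := by
      apply Finset.sum_le_sum
      intro x _
      exact mul_le_mul_of_nonneg_right (hfμ x) (le_max_right _ _)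
    have h4 : ∑ x, h x * φ x ≤ (1 + ε)⁻¹ * ∑ x, μ x * P x := by
      calc ∑ x, h x * φ x ≤ ∑ x, h x * P x := h1
        _ = (1 + ε)⁻¹ * ∑ x, f x * P x := h2
        _ ≤ (1 + ε)⁻¹ * ∑ x, μ x * P x := by
            apply mul_le_mul_of_nonneg_left h3
            positivity
    rw [← mul_div_assoc]
    gcongr
  have hce : (∑ x, μ x * P x) / (Fintype.card X : ℝ) ≤ A + ε := by
    have hsub : ∑ x, (μ x - ν x) * P x = ∑ x, μ x * P x - ∑ x, ν x * P x := by
      rw [← Finset.sum_sub_distrib]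
      exact Finset.sum_congr rfl fun x _ => by ring
    rw [hsub, sub_div] at hcorr'
    rw [hAdef]
    linarith
  have hfin : A + 1 < (1 + ε)⁻¹ * (A + ε) := by
    have := mul_le_mul_of_nonneg_left hce (show (0:ℝ) ≤ (1+ε)⁻¹ by positivity)
    linarith
  have h1ε : (1 + ε) * (1 + ε)⁻¹ = 1 := mul_inv_cancel₀ (by linarith)
  nlinarith [mul_lt_mul_of_pos_left hfin (show (0:ℝ) < 1 + ε by linarith), hA0, hε]
end

section
/- Let ε, η > 0, let r be a positive integer, let μ and ν be non-negative functions on a finite set X, and let ‖·‖ be a norm on ℝ^X. Suppose that ⟨μ − ν, (max_{1≤i≤r} φ_i)₊⟩ ≤ ε whenever φ₁, …, φ_r are functions with ‖φ_i‖* ≤ η⁻¹ for each i. Then for every sequence of r functions f₁, …, f_r with 0 ≤ f_i ≤ μ for each i and f₁ + ⋯ + f_r ≤ μ, there exist functions g₁, …, g_r with 0 ≤ g_i and g₁ + ⋯ + g_r ≤ ν such that ‖(1+ε)⁻¹ f_i − g_i‖ ≤ η for every i. -/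
section aux
variable {X : Type*} [Fintype X] [DecidableEq X] {N : (X → ℝ) → ℝ}

omit [Fintype X] [DecidableEq X] in
lemma auxN0 (hs : ∀ (c : ℝ) (f : X → ℝ), N (c • f) = |c| * N f) : N 0 = 0 := by
  have := hs 0 0; simpa using this

omit [Fintype X] [DecidableEq X] in
lemma auxNneg (hs : ∀ (c : ℝ) (f : X → ℝ), N (c • f) = |c| * N f) (f : X → ℝ) :
    N (-f) = N f := by
  have := hs (-1) f; simpa using this

omit [Fintype X] [DecidableEq X] in
lemma auxNnonneg (ha : ∀ f g : X → ℝ, N (f + g) ≤ N f + N g)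
    (hs : ∀ (c : ℝ) (f : X → ℝ), N (c • f) = |c| * N f) (f : X → ℝ) : 0 ≤ N f := by
  have h1 := ha f (-f)
  rw [add_neg_cancel, auxN0 hs, auxNneg hs] at h1
  linarith

omit [Fintype X] [DecidableEq X] in
lemma auxNsum (ha : ∀ f g : X → ℝ, N (f + g) ≤ N f + N g)
    (hs : ∀ (c : ℝ) (f : X → ℝ), N (c • f) = |c| * N f)
    {ι : Type*} (s : Finset ι) (F : ι → X → ℝ) :
    N (∑ i ∈ s, F i) ≤ ∑ i ∈ s, N (F i) := by
  classical
  induction s using Finset.induction with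
  | empty => simp [auxN0 hs]
  | insert _ _ h ih =>
    rw [Finset.sum_insert h, Finset.sum_insert h]
    exact le_trans (ha _ _) (by linarith)

lemma auxNbound (ha : ∀ f g : X → ℝ, N (f + g) ≤ N f + N g)
    (hs : ∀ (c : ℝ) (f : X → ℝ), N (c • f) = |c| * N f) (h : X → ℝ) :
    N h ≤ (∑ x : X, N ((Pi.single x 1 : X → ℝ))) * ‖h‖ := by
  have hdec : h = ∑ x : X, h x • (Pi.single x 1 : X → ℝ) := by
    funext y
    rw [Finset.sum_apply]
    simp [Pi.single_apply]
  calc N h = N (∑ x : X, h x • (Pi.single x 1 : X → ℝ)) := by rw [← hdec]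
    _ ≤ ∑ x : X, N (h x • (Pi.single x 1 : X → ℝ)) := auxNsum ha hs _ _
    _ ≤ ∑ x : X, N ((Pi.single x 1 : X → ℝ)) * ‖h‖ := by
        refine Finset.sum_le_sum fun x _ => ?_
        rw [hs]
        calc |h x| * N ((Pi.single x 1 : X → ℝ)) ≤ ‖h‖ * N ((Pi.single x 1 : X → ℝ)) := by
              have := norm_le_pi_norm h x
              have hnn := auxNnonneg ha hs ((Pi.single x 1 : X → ℝ))
              have : |h x| ≤ ‖h‖ := by simpa [Real.norm_eq_abs] using norm_le_pi_norm h x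
              nlinarith
          _ = N ((Pi.single x 1 : X → ℝ)) * ‖h‖ := by ring
    _ = (∑ x : X, N ((Pi.single x 1 : X → ℝ))) * ‖h‖ := by rw [Finset.sum_mul]

lemma auxNcont (ha : ∀ f g : X → ℝ, N (f + g) ≤ N f + N g)
    (hs : ∀ (c : ℝ) (f : X → ℝ), N (c • f) = |c| * N f) : Continuous N := by
  set C : ℝ := ∑ x : X, N ((Pi.single x 1 : X → ℝ)) with hC
  have hC0 : 0 ≤ C := Finset.sum_nonneg fun x _ => auxNnonneg ha hs _
  have hlip : LipschitzWith (Real.toNNReal C) N := by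
    refine LipschitzWith.of_dist_le_mul fun f g => ?_
    have h1 : N f ≤ N g + N (f - g) := by
      have := ha g (f - g); simpa [add_sub_cancel] using this
    have h2 : N g ≤ N f + N (g - f) := by
      have := ha f (g - f); simpa [add_sub_cancel] using this
    have h3 : N (g - f) = N (f - g) := by
      rw [show g - f = -(f - g) by ring, auxNneg hs]
    have hb : N (f - g) ≤ C * ‖f - g‖ := auxNbound ha hs _
    rw [Real.dist_eq, dist_eq_norm]
    rw [abs_le]
    constructor
    · have : (Real.toNNReal C : ℝ) = C := Real.coe_toNNReal _ hC0
      rw [this]; rw [h3] at h2; linarith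
    · have : (Real.toNNReal C : ℝ) = C := Real.coe_toNNReal _ hC0
      rw [this]; linarith
  exact hlip.continuous

lemma auxNlow (ha : ∀ f g : X → ℝ, N (f + g) ≤ N f + N g)
    (hs : ∀ (c : ℝ) (f : X → ℝ), N (c • f) = |c| * N f)
    (hd : ∀ f : X → ℝ, N f = 0 → f = 0) :
    ∃ c : ℝ, 0 < c ∧ ∀ f : X → ℝ, c * ‖f‖ ≤ N f := by
  rcases isEmpty_or_nonempty X with hX | hX
  · refine ⟨1, one_pos, fun f => ?_⟩
    have : f = 0 := funext fun x => (IsEmpty.false x).elim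
    simp [this, auxN0 hs]
  · have hne : (Metric.sphere (0 : X → ℝ) 1).Nonempty := by
      rw [NormedSpace.sphere_nonempty]; norm_num
    obtain ⟨w₀, hw₀mem, hw₀min⟩ :=
      (isCompact_sphere (0 : X → ℝ) 1).exists_isMinOn hne (auxNcont ha hs).continuousOn
    have hw₀ : ‖w₀‖ = 1 := by simpa using hw₀mem
    have hw₀ne : w₀ ≠ 0 := by
      intro h; rw [h] at hw₀; simp at hw₀
    have hc : 0 < N w₀ := by
      rcases lt_or_eq_of_le (auxNnonneg ha hs w₀) with h | h
      · exact h
      · exact absurd (hd w₀ h.symm) hw₀ne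
    refine ⟨N w₀, hc, fun f => ?_⟩
    rcases eq_or_ne f 0 with rfl | hf
    · simp [auxN0 hs]
    · have hnf : (0:ℝ) < ‖f‖ := norm_pos_iff.2 hf
      have hmem : ‖f‖⁻¹ • f ∈ Metric.sphere (0 : X → ℝ) 1 := by
        simp [norm_smul, abs_of_pos (inv_pos.2 hnf), inv_mul_cancel₀ hnf.ne']
      have hmin := hw₀min hmem
      have hval : N (‖f‖⁻¹ • f) = ‖f‖⁻¹ * N f := by
        rw [hs, abs_of_pos (inv_pos.2 hnf)]
      have : N w₀ ≤ ‖f‖⁻¹ * N f := hval ▸ hmin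
      calc N w₀ * ‖f‖ ≤ (‖f‖⁻¹ * N f) * ‖f‖ := by nlinarith
        _ = N f := by field_simp

end aux

set_option maxHeartbeats 2000000 in
/-- Dense-model transference principle for colouring theorems. -/
theorem stmt_2 {X : Type*} [Fintype X] (ε η : ℝ) (hε : 0 < ε) (hη : 0 < η)
    (r : ℕ) (hr : 0 < r)
    (μ ν : X → ℝ) (hμ : 0 ≤ μ) (hν : 0 ≤ ν)
    (N : (X → ℝ) → ℝ)
    (hN_add : ∀ f g : X → ℝ, N (f + g) ≤ N f + N g)
    (hN_smul : ∀ (c : ℝ) (f : X → ℝ), N (c • f) = |c| * N f)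
    (hN_def : ∀ f : X → ℝ, N f = 0 → f = 0)
    (hcorr : ∀ φ : Fin r → X → ℝ,
      (∀ i : Fin r, ∀ f : X → ℝ, N f ≤ 1 →
        |(∑ x, f x * φ i x) / (Fintype.card X : ℝ)| ≤ η⁻¹) →
      (∑ x, (μ x - ν x) * max (⨆ i : Fin r, φ i x) 0) / (Fintype.card X : ℝ) ≤ ε) :
    ∀ f : Fin r → X → ℝ, (∀ i, 0 ≤ f i) → (∀ i, f i ≤ μ) → (∑ i, f i) ≤ μ →
      ∃ g : Fin r → X → ℝ, (∀ i, 0 ≤ g i) ∧ (∑ i, g i) ≤ ν ∧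
        ∀ i, N ((1 + ε)⁻¹ • f i - g i) ≤ η := by
  classical
  intro f hf0 hfμ hfsum
  rcases isEmpty_or_nonempty X with hX | hX
  · refine ⟨fun _ => 0, fun i => le_refl _, by simp [hν], fun i => ?_⟩
    have h0 : (1 + ε)⁻¹ • f i - 0 = 0 := Subsingleton.elim _ _
    rw [h0, auxN0 hN_smul]
    exact hη.le
  by_contra hcon
  push_neg at hcon
  obtain ⟨clow, hclow, hlow⟩ := auxNlow hN_add hN_smul hN_def
  have hNc : Continuous N := auxNcont hN_add hN_smul
  have h1ε : (0:ℝ) < 1 + ε := by linarith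
  set p : Fin r → X → ℝ := fun i => (1 + ε)⁻¹ • f i with hp
  set S : Set (Fin r → X → ℝ) := {g | (∀ i, 0 ≤ g i) ∧ (∑ i, g i) ≤ ν} with hS
  set B : Set (Fin r → X → ℝ) := {q | ∀ i, N (p i - q i) ≤ η} with hB
  -- S convex
  have hSconv : Convex ℝ S := by
    intro g hg h hh a b ha hb hab
    constructor
    · intro i x
      have : (0:ℝ) ≤ a * g i x + b * h i x :=
        add_nonneg (mul_nonneg ha (hg.1 i x)) (mul_nonneg hb (hh.1 i x))
      simpa using this
    · intro x
      have hgx : ∑ i, g i x ≤ ν x := by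
        have := hg.2 x; simpa [Finset.sum_apply] using this
      have hhx : ∑ i, h i x ≤ ν x := by
        have := hh.2 x; simpa [Finset.sum_apply] using this
      have : ∑ i, (a * g i x + b * h i x) ≤ ν x := by
        rw [Finset.sum_add_distrib, ← Finset.mul_sum, ← Finset.mul_sum]
        calc a * ∑ i, g i x + b * ∑ i, h i x ≤ a * ν x + b * ν x :=
              add_le_add (mul_le_mul_of_nonneg_left hgx ha)
                (mul_le_mul_of_nonneg_left hhx hb)
          _ = ν x := by linear_combination ν x * hab
      simpa [Finset.sum_apply] using this
  -- S compact
  have hScomp : IsCompact S := by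
    have hgle : ∀ g ∈ S, ∀ i x, g i x ≤ ν x := by
      intro g hg i x
      calc g i x ≤ ∑ j, g j x :=
            Finset.single_le_sum (fun j _ => hg.1 j x) (Finset.mem_univ i)
        _ ≤ ν x := by have := hg.2 x; simpa [Finset.sum_apply] using this
    apply Metric.isCompact_of_isClosed_isBounded
    · have hrw : S = (⋂ (i : Fin r), ⋂ (x : X), {g : Fin r → X → ℝ | 0 ≤ g i x}) ∩
          ⋂ (x : X), {g : Fin r → X → ℝ | ∑ i, g i x ≤ ν x} := by
        ext g
        simp only [hS, Set.mem_setOf_eq, Set.mem_inter_iff, Set.mem_iInter]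
        constructor
        · rintro ⟨h1, h2⟩
          exact ⟨fun i x => h1 i x, fun x => by simpa [Finset.sum_apply] using h2 x⟩
        · rintro ⟨h1, h2⟩
          exact ⟨fun i x => h1 i x, fun x => by simpa [Finset.sum_apply] using h2 x⟩
      rw [hrw]
      refine IsClosed.inter ?_ ?_
      · exact isClosed_iInter fun i => isClosed_iInter fun x =>
          isClosed_le continuous_const ((continuous_apply x).comp (continuous_apply i))
      · exact isClosed_iInter fun x => isClosed_le
          (continuous_finset_sum _ fun i _ => (continuous_apply x).comp (continuous_apply i))
          continuous_const
    · refine (Metric.isBounded_closedBall (x := (0 : Fin r → X → ℝ)) (r := ‖ν‖)).subset ?_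
      intro g hg
      rw [Metric.mem_closedBall, dist_zero_right]
      rw [pi_norm_le_iff_of_nonneg (norm_nonneg ν)]
      intro i
      rw [pi_norm_le_iff_of_nonneg (norm_nonneg ν)]
      intro x
      rw [Real.norm_eq_abs, abs_of_nonneg (hg.1 i x)]
      calc g i x ≤ ν x := hgle g hg i x
        _ ≤ |ν x| := le_abs_self _
        _ ≤ ‖ν‖ := by simpa [Real.norm_eq_abs] using norm_le_pi_norm ν x
  -- B closed
  have hBclosed : IsClosed B := by
    have : B = ⋂ (i : Fin r), {q : Fin r → X → ℝ | N (p i - q i) ≤ η} := by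
      ext q; simp [hB]
    rw [this]
    exact isClosed_iInter fun i => isClosed_le
      (hNc.comp (continuous_const.sub (continuous_apply i))) continuous_const
  -- B convex
  have hBconv : Convex ℝ B := by
    intro q hq q' hq' a b ha hb hab i
    have hdec : p i - (a • q + b • q') i = a • (p i - q i) + b • (p i - q' i) := by
      funext x
      simp only [Pi.add_apply, Pi.smul_apply, Pi.sub_apply, smul_eq_mul]
      linear_combination (-(p i x)) * hab
    rw [hdec]
    calc N (a • (p i - q i) + b • (p i - q' i))
        ≤ N (a • (p i - q i)) + N (b • (p i - q' i)) := hN_add _ _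
      _ = a * N (p i - q i) + b * N (p i - q' i) := by
          rw [hN_smul, hN_smul, abs_of_nonneg ha, abs_of_nonneg hb]
      _ ≤ a * η + b * η := by
          have h1 := hq i; have h2 := hq' i
          nlinarith [mul_le_mul_of_nonneg_left h1 ha, mul_le_mul_of_nonneg_left h2 hb]
      _ = η := by linear_combination η * hab
  -- disjoint
  have hdisj : Disjoint S B := by
    rw [Set.disjoint_left]
    intro q hqS hqB
    obtain ⟨i, hi⟩ := hcon q hqS.1 hqS.2
    exact absurd (hqB i) (not_le.2 hi)
  obtain ⟨Φ, u, v, hΦS, huv, hΦB⟩ :=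
    geometric_hahn_banach_compact_closed hSconv hScomp hBconv hBclosed hdisj
  -- representation
  set ψ : Fin r → X → ℝ :=
    fun i x => Φ (Pi.single i (Pi.single x 1 : X → ℝ) : Fin r → X → ℝ) with hψ
  have hdecG : ∀ G : Fin r → X → ℝ,
      G = ∑ i, ∑ x, G i x • (Pi.single i (Pi.single x 1 : X → ℝ) : Fin r → X → ℝ) := by
    intro G
    funext j y
    simp only [Finset.sum_apply, Pi.smul_apply, Pi.single_apply, smul_eq_mul, apply_ite,
      ite_apply, Pi.zero_apply, mul_ite, mul_one, mul_zero, Finset.mem_univ, if_true]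
    have h1 : ∀ x : Fin r,
        (∑ x_1 : X, if j = x then if y = x_1 then G x x_1 else 0 else 0)
          = if j = x then G x y else 0 := by
      intro x
      by_cases h : j = x
      · simp [h, Finset.sum_ite_eq]
      · simp [h]
    rw [Finset.sum_congr rfl fun x _ => h1 x, Finset.sum_ite_eq]
    simp
  have hrep : ∀ G : Fin r → X → ℝ, Φ G = ∑ i, ∑ x, G i x * ψ i x := by
    intro G
    conv_lhs => rw [hdecG G]
    rw [map_sum]
    refine Finset.sum_congr rfl fun i _ => ?_
    rw [map_sum]
    refine Finset.sum_congr rfl fun x _ => ?_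
    rw [map_smul, smul_eq_mul, hψ]
  -- maximizing index
  haveI hfinr : Nonempty (Fin r) := ⟨⟨0, hr⟩⟩
  have hmax : ∀ x : X, ∃ i₀ : Fin r, ∀ i, ψ i x ≤ ψ i₀ x := fun x =>
    Finite.exists_max fun i => ψ i x
  choose ix hix using hmax
  set M : X → ℝ := fun x => max (ψ (ix x) x) 0 with hM
  have hM0 : ∀ x, 0 ≤ M x := fun x => le_max_right _ _
  have hψleM : ∀ i x, ψ i x ≤ M x := fun i x => le_trans (hix x i) (le_max_left _ _)
  -- the maximizer in S
  set gs : Fin r → X → ℝ := fun i x => if i = ix x ∧ 0 < ψ i x then ν x else 0 with hgs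
  have hgsS : gs ∈ S := by
    constructor
    · intro i x
      have hgsx : gs i x = if i = ix x ∧ 0 < ψ i x then ν x else 0 := rfl
      rw [hgsx]
      split
      · exact hν x
      · exact le_refl _
    · intro x
      have h1 : ∀ i : Fin r, gs i x = if i = ix x then (if 0 < ψ i x then ν x else 0) else 0 := by
        intro i; by_cases h : i = ix x <;> simp [hgs, h]
      have hsum : ∑ i, gs i x = if 0 < ψ (ix x) x then ν x else 0 := by
        rw [Finset.sum_congr rfl fun i _ => h1 i, Finset.sum_ite_eq']
        simp
      have : (∑ i, gs i) x = ∑ i, gs i x := by simp [Finset.sum_apply]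
      rw [this, hsum]
      split
      · exact le_refl _
      · exact hν x
  have hΦgs : Φ gs = ∑ x, ν x * M x := by
    rw [hrep, Finset.sum_comm]
    refine Finset.sum_congr rfl fun x _ => ?_
    have h1 : ∀ i : Fin r, gs i x * ψ i x
        = if i = ix x then (if 0 < ψ i x then ν x * ψ i x else 0) else 0 := by
      intro i
      by_cases h : i = ix x
      · by_cases h2 : 0 < ψ i x <;> simp [hgs, h, h2]
      · simp [hgs, h]
    rw [Finset.sum_congr rfl fun i _ => h1 i, Finset.sum_ite_eq']
    simp only [Finset.mem_univ, if_true]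
    by_cases h : 0 < ψ (ix x) x
    · simp [h, hM, max_eq_left h.le, mul_comm]
    · simp [h, hM, max_eq_right (not_lt.1 h)]
  -- Φ p upper bound
  have hΦp : Φ p ≤ (1 + ε)⁻¹ * ∑ x, μ x * M x := by
    rw [hrep, Finset.sum_comm, Finset.mul_sum]
    refine Finset.sum_le_sum fun x _ => ?_
    have hfx : ∑ i, f i x ≤ μ x := by
      have := hfsum x
      simpa [Finset.sum_apply] using this
    have hstep : ∑ i, p i x * ψ i x = (1 + ε)⁻¹ * ∑ i, f i x * ψ i x := by
      rw [Finset.mul_sum]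
      refine Finset.sum_congr rfl fun i _ => ?_
      simp [hp, mul_assoc]
    rw [hstep]
    have h2 : ∑ i, f i x * ψ i x ≤ μ x * M x := by
      calc ∑ i, f i x * ψ i x ≤ ∑ i, f i x * M x := Finset.sum_le_sum fun i _ =>
            mul_le_mul_of_nonneg_left (hψleM i x) (hf0 i x)
        _ = (∑ i, f i x) * M x := by rw [Finset.sum_mul]
        _ ≤ μ x * M x := mul_le_mul_of_nonneg_right hfx (hM0 x)
    exact mul_le_mul_of_nonneg_left h2 (by positivity)
  have hpB : p ∈ B := fun i => by rw [sub_self, auxN0 hN_smul]; exact hη.le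
  have hvp : v < Φ p := hΦB p hpB
  -- dual sups
  set T : Fin r → Set ℝ := fun i => (fun w : X → ℝ => ∑ x, w x * ψ i x) '' {w | N w ≤ 1} with hT
  have hT0 : ∀ i, (0:ℝ) ∈ T i := fun i =>
    ⟨0, by simp [auxN0 (N := N) hN_smul], by simp⟩
  have hTbdd : ∀ i, BddAbove (T i) := by
    intro i
    refine ⟨(∑ x, |ψ i x|) * clow⁻¹, ?_⟩
    rintro t ⟨w, hw, rfl⟩
    have hwn : ‖w‖ ≤ clow⁻¹ := by
      have h1 : clow * ‖w‖ ≤ 1 := le_trans (hlow w) hw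
      calc ‖w‖ = (clow * ‖w‖) * clow⁻¹ := by field_simp
        _ ≤ 1 * clow⁻¹ := mul_le_mul_of_nonneg_right h1 (inv_pos.2 hclow).le
        _ = clow⁻¹ := one_mul _
    calc ∑ x, w x * ψ i x ≤ ∑ x, |w x * ψ i x| := Finset.sum_le_sum fun x _ => le_abs_self _
      _ = ∑ x, |w x| * |ψ i x| := by simp [abs_mul]
      _ ≤ ∑ x, clow⁻¹ * |ψ i x| := Finset.sum_le_sum fun x _ =>
          mul_le_mul_of_nonneg_right
            (le_trans (by simpa [Real.norm_eq_abs] using norm_le_pi_norm w x) hwn) (abs_nonneg _)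
      _ = (∑ x, |ψ i x|) * clow⁻¹ := by rw [← Finset.mul_sum, mul_comm]
  set cc : Fin r → ℝ := fun i => sSup (T i) with hcc
  have hccle : ∀ (i : Fin r) (w : X → ℝ), N w ≤ 1 → ∑ x, w x * ψ i x ≤ cc i := fun i w hw =>
    le_csSup (hTbdd i) ⟨w, hw, rfl⟩
  have hcc0 : ∀ i, 0 ≤ cc i := fun i => le_csSup (hTbdd i) (hT0 i)
  have hccabs : ∀ (i : Fin r) (w : X → ℝ), N w ≤ 1 → |∑ x, w x * ψ i x| ≤ cc i := by
    intro i w hw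
    rw [abs_le]
    refine ⟨?_, hccle i w hw⟩
    have hw' : N (-w) ≤ 1 := by rw [auxNneg hN_smul]; exact hw
    have h2 := hccle i (-w) hw'
    have heq : ∑ x, (-w) x * ψ i x = -∑ x, w x * ψ i x := by
      rw [← Finset.sum_neg_distrib]
      exact Finset.sum_congr rfl fun x _ => by simp
    rw [heq] at h2
    linarith
  -- single-slot evaluation of Φ
  have hslot : ∀ (i : Fin r) (w : X → ℝ),
      Φ (Pi.single i w : Fin r → X → ℝ) = ∑ x, w x * ψ i x := by
    intro i w
    rw [hrep]
    have h1 : ∀ j : Fin r, (∑ x, (Pi.single i w : Fin r → X → ℝ) j x * ψ j x)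
        = if j = i then ∑ x, w x * ψ j x else 0 := by
      intro j
      by_cases h : j = i
      · subst h; simp
      · simp [Pi.single_eq_of_ne h, h]
    rw [Finset.sum_congr rfl fun j _ => h1 j, Finset.sum_ite_eq']
    simp
  have hηcc : ∀ i, η * cc i ≤ Φ p - v := by
    intro i
    have hkey : ∀ t ∈ T i, t ≤ (Φ p - v) / η := by
      rintro t ⟨w, hw, rfl⟩
      have hqB : (p - Pi.single i (η • w) : Fin r → X → ℝ) ∈ B := by
        intro j
        have heq2 : p j - (p - (Pi.single i (η • w) : Fin r → X → ℝ)) j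
            = (Pi.single i (η • w) : Fin r → X → ℝ) j := by
          simp
        rw [heq2]
        by_cases h : j = i
        · subst h
          rw [Pi.single_eq_same, hN_smul, abs_of_pos hη]
          have hw' : N w ≤ 1 := hw
          nlinarith [mul_le_mul_of_nonneg_left hw' hη.le]
        · rw [Pi.single_eq_of_ne h, auxN0 hN_smul]
          exact hη.le
      have h2 := hΦB _ hqB
      rw [map_sub, hslot] at h2
      have h3 : ∑ x, (η • w) x * ψ i x = η * ∑ x, w x * ψ i x := by
        rw [Finset.mul_sum]
        exact Finset.sum_congr rfl fun x _ => by simp [mul_assoc]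
      rw [h3] at h2
      rw [le_div_iff₀ hη]
      linarith
    have h4 : cc i ≤ (Φ p - v) / η := csSup_le ⟨0, hT0 i⟩ hkey
    calc η * cc i ≤ η * ((Φ p - v) / η) := mul_le_mul_of_nonneg_left h4 hη.le
      _ = Φ p - v := by field_simp
  obtain ⟨i₀, hi₀⟩ := Finite.exists_max cc
  set c : ℝ := cc i₀ with hc
  have hcpos : 0 < c := by
    rcases lt_or_eq_of_le (hcc0 i₀) with h | h
    · exact h
    · exfalso
      have hccz : ∀ i, cc i = 0 := fun i => le_antisymm (h ▸ hi₀ i) (hcc0 i)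
      have hψ0 : ∀ i, ψ i = 0 := by
        intro i
        by_contra hne
        have hNpos : 0 < N (ψ i) := by
          rcases lt_or_eq_of_le (auxNnonneg hN_add hN_smul (ψ i)) with h' | h'
          · exact h'
          · exact absurd (hN_def _ h'.symm) hne
        set w : X → ℝ := (N (ψ i))⁻¹ • ψ i with hw
        have hw1 : N w ≤ 1 := by
          rw [hw, hN_smul, abs_of_pos (inv_pos.2 hNpos)]
          rw [inv_mul_cancel₀ hNpos.ne']
        have hpos : 0 < ∑ x, w x * ψ i x := by
          have heq3 : ∑ x, w x * ψ i x = (N (ψ i))⁻¹ * ∑ x, ψ i x * ψ i x := by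
            rw [Finset.mul_sum]
            exact Finset.sum_congr rfl fun x _ => by simp [hw, mul_assoc]
          rw [heq3]
          apply mul_pos (inv_pos.2 hNpos)
          obtain ⟨x₀, hx₀⟩ : ∃ x, ψ i x ≠ 0 := by
            by_contra hall; push_neg at hall; exact hne (funext hall)
          exact Finset.sum_pos' (fun x _ => mul_self_nonneg _)
            ⟨x₀, Finset.mem_univ x₀, mul_self_pos.2 hx₀⟩
        have h6 := hccle i w hw1
        rw [hccz i] at h6
        linarith
      have hΦp0 : Φ p = 0 := by
        rw [hrep]
        refine Finset.sum_eq_zero fun i _ => Finset.sum_eq_zero fun x _ => ?_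
        rw [show ψ i x = 0 from congrFun (hψ0 i) x, mul_zero]
      have h0S : (0 : Fin r → X → ℝ) ∈ S := ⟨fun i => le_refl _, by simp [hν]⟩
      have h7 := hΦS 0 h0S
      rw [map_zero] at h7
      rw [hΦp0] at hvp
      linarith
  -- apply hcorr
  set n : ℝ := (Fintype.card X : ℝ) with hn
  have hnpos : 0 < n := by
    rw [hn]; exact_mod_cast Fintype.card_pos
  set lam : ℝ := n * (η * c)⁻¹ with hlam
  have hlampos : 0 < lam := mul_pos hnpos (inv_pos.2 (mul_pos hη hcpos))
  have hhyp : ∀ (i : Fin r) (w : X → ℝ), N w ≤ 1 →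
      |(∑ x, w x * (fun i => lam • ψ i) i x) / n| ≤ η⁻¹ := by
    intro i w hw
    have h1 : ∑ x, w x * (lam • ψ i) x = lam * ∑ x, w x * ψ i x := by
      rw [Finset.mul_sum]
      exact Finset.sum_congr rfl fun x _ => by simp; ring
    simp only []
    rw [h1, abs_div, abs_mul, abs_of_pos hlampos, abs_of_pos hnpos]
    have h2 := hccabs i w hw
    have h3 : lam * |∑ x, w x * ψ i x| / n ≤ lam * c / n := by
      gcongr
      exact le_trans h2 (hi₀ i)
    have h4 : lam * c / n = η⁻¹ := by
      rw [hlam]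
      field_simp
    linarith
  have hconc := hcorr (fun i => lam • ψ i) hhyp
  have hsup : ∀ x : X, max (⨆ i, (fun i => lam • ψ i) i x) 0 = lam * M x := by
    intro x
    have h1 : (⨆ i, (lam • ψ i) x) = lam * ψ (ix x) x := by
      apply le_antisymm
      · apply ciSup_le
        intro i
        simp only [Pi.smul_apply, smul_eq_mul]
        exact mul_le_mul_of_nonneg_left (hix x i) hlampos.le
      · have := le_ciSup (f := fun i : Fin r => (lam • ψ i) x)
          (Set.finite_range _).bddAbove (ix x)
        simpa using this
    simp only []
    rw [h1, hM]
    have h2 := mul_max_of_nonneg (ψ (ix x) x) (0:ℝ) hlampos.le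
    rw [mul_zero] at h2
    rw [← h2]
  have hsum2 : (∑ x, (μ x - ν x) * max (⨆ i, (fun i => lam • ψ i) i x) 0) / n
      = lam * (∑ x, (μ x - ν x) * M x) / n := by
    rw [Finset.mul_sum]
    congr 1
    exact Finset.sum_congr rfl fun x _ => by rw [hsup x]; ring
  rw [hsum2] at hconc
  have hD : ∑ x, (μ x - ν x) * M x ≤ ε * (η * c) := by
    have h1 : lam * (∑ x, (μ x - ν x) * M x) / n
        = (∑ x, (μ x - ν x) * M x) * (η * c)⁻¹ := by
      rw [hlam]; field_simp
    rw [h1] at hconc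
    have h2 : 0 < η * c := mul_pos hη hcpos
    calc ∑ x, (μ x - ν x) * M x
        = ((∑ x, (μ x - ν x) * M x) * (η * c)⁻¹) * (η * c) := by field_simp
      _ ≤ ε * (η * c) := mul_le_mul_of_nonneg_right hconc h2.le
  have hDsplit : ∑ x, (μ x - ν x) * M x = (∑ x, μ x * M x) - ∑ x, ν x * M x := by
    rw [← Finset.sum_sub_distrib]
    exact Finset.sum_congr rfl fun x _ => by ring
  have htt0 : 0 ≤ ∑ x, ν x * M x := Finset.sum_nonneg fun x _ => mul_nonneg (hν x) (hM0 x)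
  have h5 : ∑ x, ν x * M x < u := hΦgs ▸ hΦS gs hgsS
  have h6 : η * c ≤ Φ p - v := hηcc i₀
  set tt : ℝ := ∑ x, ν x * M x with htt
  set A : ℝ := ∑ x, μ x * M x with hA
  have hAle : A ≤ tt + ε * (η * c) := by
    rw [hDsplit] at hD
    linarith
  have h7 : tt < (1 + ε)⁻¹ * (tt + ε * (η * c)) - η * c := by
    have h8 : tt < (1 + ε)⁻¹ * A - η * c := by linarith
    have hmono : (1 + ε)⁻¹ * A ≤ (1 + ε)⁻¹ * (tt + ε * (η * c)) :=
      mul_le_mul_of_nonneg_left hAle (by positivity)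
    linarith
  have hs : 0 < η * c := mul_pos hη hcpos
  have h9 : (1 + ε) * tt < (1 + ε) * ((1 + ε)⁻¹ * (tt + ε * (η * c)) - η * c) :=
    mul_lt_mul_of_pos_left h7 h1ε
  have h10 : (1 + ε) * ((1 + ε)⁻¹ * (tt + ε * (η * c)) - η * c)
      = (tt + ε * (η * c)) - (1 + ε) * (η * c) := by
    field_simp
  rw [h10] at h9
  nlinarith [mul_nonneg hε.le htt0]
end

section
/- Let Ψ be a set of functions on a finite set X taking values in [−2, 2], and let ε > 0. Then there exist constants d and M depending only on ε such that for every function ψ in the convex hull of Ψ, there is a function ω belonging to M times the convex hull of all products ±φ₁⋯φ_j with j ≤ d and φ₁, …, φ_j ∈ Ψ, such that ‖ψ₊ − ω‖_∞ < ε. -/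
/-- Polynomial approximation of positive parts: constants `d`, `M` depending only
on `ε` such that the positive part of any convex combination of `[-2,2]`-valued
functions from `Ψ` is uniformly `ε`-approximated by `M` times a convex combination
of signed products of at most `d` functions of `Ψ`. -/
theorem stmt_4 (ε : ℝ) (hε : 0 < ε) :
    ∃ (d : ℕ) (M : ℝ),
      ∀ (X : Type) [Fintype X] (Ψ : Set (X → ℝ)),
        (∀ φ ∈ Ψ, ∀ x, φ x ∈ Set.Icc (-2 : ℝ) 2) →
        ∀ ψ ∈ convexHull ℝ Ψ,
          ∃ ω ∈ convexHull ℝ {g : X → ℝ |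
              ∃ (j : ℕ) (φ : Fin j → X → ℝ) (σ : ℝ),
                1 ≤ j ∧ j ≤ d ∧ (∀ i, φ i ∈ Ψ) ∧ (σ = 1 ∨ σ = -1) ∧
                g = fun x => σ * ∏ i, φ i x},
            ∀ x, |max (ψ x) 0 - M * ω x| < ε := by
  classical
  obtain ⟨p, hp⟩ := exists_polynomial_near_of_continuousOn (-2) 2 (fun t => max t 0)
    ((continuous_id.max continuous_const).continuousOn) (ε / 2) (by positivity)
  set q : Polynomial ℝ := p - Polynomial.C (p.eval 0) with hqdef
  have hq0 : q.eval 0 = 0 := by simp [hqdef]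
  have hqnear : ∀ t ∈ Set.Icc (-2 : ℝ) 2, |q.eval t - max t 0| < ε := by
    intro t ht
    have h1 := hp t ht
    have h2 := hp 0 (by norm_num)
    have h2' : |p.eval 0| < ε / 2 := by simpa using h2
    have hEq : q.eval t - max t 0 = (p.eval t - max t 0) - p.eval 0 := by
      simp [hqdef]; ring
    calc |q.eval t - max t 0| = |(p.eval t - max t 0) - p.eval 0| := by rw [hEq]
      _ ≤ |p.eval t - max t 0| + |p.eval 0| := abs_sub _ _
      _ < ε / 2 + ε / 2 := add_lt_add h1 h2'
      _ = ε := by ring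
  set d : ℕ := max q.natDegree 1 with hddef
  have hdeg : q.natDegree < d + 1 := Nat.lt_succ_of_le (le_max_left _ _)
  have hd1 : 1 ≤ d := le_max_right _ _
  set M : ℝ := ∑ j ∈ Finset.Icc 1 d, |q.coeff j| with hMdef
  refine ⟨d, M, ?_⟩
  intro X _ Ψ hΨ ψ hψ
  set S := {g : X → ℝ |
      ∃ (j : ℕ) (φ : Fin j → X → ℝ) (σ : ℝ),
        1 ≤ j ∧ j ≤ d ∧ (∀ i, φ i ∈ Ψ) ∧ (σ = 1 ∨ σ = -1) ∧
        g = fun x => σ * ∏ i, φ i x} with hSdef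
  -- ψ takes values in [-2, 2]
  have hrange : ∀ x, ψ x ∈ Set.Icc (-2 : ℝ) 2 := by
    have hsub : convexHull ℝ Ψ ⊆ Set.univ.pi (fun _ : X => Set.Icc (-2 : ℝ) 2) := by
      apply convexHull_min
      · intro f hf x _; exact hΨ f hf x
      · exact convex_pi fun i _ => convex_Icc _ _
    intro x
    exact hsub hψ x (Set.mem_univ x)
  -- key lemma: signed powers of ψ lie in the convex hull of S
  have hpow : ∀ (j : ℕ) (σ : ℝ), 1 ≤ j → j ≤ d → (σ = 1 ∨ σ = -1) →
      (fun x => σ * ψ x ^ j) ∈ convexHull ℝ S := by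
    intro j σ hj1 hjd hσ
    rw [convexHull_eq] at hψ
    obtain ⟨ι, t, w, z, hw0, hw1, hz, hcm⟩ := hψ
    have hψx : ∀ x, ψ x = ∑ i ∈ t, w i * z i x := by
      intro x
      rw [← hcm, Finset.centerMass_eq_of_sum_1 _ _ hw1]
      simp [Finset.sum_apply]
    have key : (fun x => σ * ψ x ^ j) =
        ∑ P ∈ Fintype.piFinset (fun _ : Fin j => t),
          (∏ k, w (P k)) • (fun x => σ * ∏ k, z (P k) x) := by
      funext x
      rw [Finset.sum_apply]
      have hxj : ψ x ^ j =
          ∑ P ∈ Fintype.piFinset (fun _ : Fin j => t), ∏ k, (w (P k) * z (P k) x) := by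
        rw [hψx x, Finset.sum_prod_piFinset (ι := Fin j) t (fun _ i => w i * z i x),
          Finset.prod_const, Finset.card_univ, Fintype.card_fin]
      rw [hxj, Finset.mul_sum]
      refine Finset.sum_congr rfl fun P _ => ?_
      simp only [Pi.smul_apply, smul_eq_mul, Finset.prod_mul_distrib]
      ring
    rw [key]
    refine (convex_convexHull ℝ S).sum_mem ?_ ?_ ?_
    · intro P hP
      refine Finset.prod_nonneg fun k _ => hw0 _ ?_
      exact Fintype.mem_piFinset.mp hP k
    · rw [Finset.sum_prod_piFinset (ι := Fin j) t (fun _ i => w i)]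
      simp [hw1]
    · intro P hP
      apply subset_convexHull
      exact ⟨j, fun k => z (P k), σ, hj1, hjd,
        fun k => hz _ (Fintype.mem_piFinset.mp hP k), hσ, rfl⟩
  -- split on whether M = 0
  by_cases hM : M = 0
  · -- then q = 0, so the positive part is everywhere < ε
    have hcoeff : ∀ j, q.coeff j = 0 := by
      have hall : ∀ j ∈ Finset.Icc 1 d, |q.coeff j| = 0 := by
        intro j hj
        exact (Finset.sum_eq_zero_iff_of_nonneg fun i _ => abs_nonneg _).mp hM j hj
      intro j
      rcases Nat.eq_zero_or_pos j with h0 | h0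
      · rw [h0, Polynomial.coeff_zero_eq_eval_zero]; exact hq0
      · rcases le_or_gt j d with hle | hlt
        · exact abs_eq_zero.mp (hall j (Finset.mem_Icc.mpr ⟨h0, hle⟩))
        · exact Polynomial.coeff_eq_zero_of_natDegree_lt
            (lt_of_le_of_lt (Nat.le_of_lt_succ hdeg) hlt)
    have hqzero : q = 0 := Polynomial.ext fun n => by simp [hcoeff n]
    have hΨne : Ψ.Nonempty := by
      by_contra h
      rw [Set.not_nonempty_iff_eq_empty] at h
      rw [h, convexHull_empty] at hψ
      exact hψ
    obtain ⟨φ0, hφ0⟩ := hΨne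
    refine ⟨fun x => 1 * ∏ _i : Fin 1, φ0 x, subset_convexHull ℝ S
      ⟨1, fun _ => φ0, 1, le_refl 1, hd1, fun _ => hφ0, Or.inl rfl, rfl⟩, ?_⟩
    intro x
    have := hqnear (ψ x) (hrange x)
    rw [hqzero] at this
    simp only [Polynomial.eval_zero, zero_sub, abs_neg] at this
    rw [hM]
    simpa using this
  · -- M > 0 case
    have hMpos : 0 < M :=
      lt_of_le_of_ne (Finset.sum_nonneg fun j _ => abs_nonneg _) (Ne.symm hM)
    set σf : ℕ → ℝ := fun j => if q.coeff j < 0 then -1 else 1 with hσf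
    have hσval : ∀ j, |q.coeff j| * σf j = q.coeff j := by
      intro j
      by_cases h : q.coeff j < 0
      · simp [hσf, h, abs_of_neg h]
      · simp [hσf, h, abs_of_nonneg (le_of_not_gt h)]
    refine ⟨∑ j ∈ Finset.Icc 1 d, (|q.coeff j| / M) • (fun x => σf j * ψ x ^ j), ?_, ?_⟩
    · refine (convex_convexHull ℝ S).sum_mem ?_ ?_ ?_
      · intro j _; positivity
      · rw [← Finset.sum_div]
        field_simp
        exact hMdef.symm
      · intro j hj
        obtain ⟨h1, h2⟩ := Finset.mem_Icc.mp hj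
        refine hpow j (σf j) h1 h2 ?_
        by_cases h : q.coeff j < 0
        · right; simp [hσf, h]
        · left; simp [hσf, h]
    · intro x
      have hMω : M * (∑ j ∈ Finset.Icc 1 d,
          (|q.coeff j| / M) • (fun x => σf j * ψ x ^ j)) x = q.eval (ψ x) := by
        rw [Finset.sum_apply, Finset.mul_sum]
        have hterm : ∀ j ∈ Finset.Icc 1 d,
            M * ((|q.coeff j| / M) • (fun x => σf j * ψ x ^ j)) x
              = q.coeff j * ψ x ^ j := by
          intro j _
          simp only [Pi.smul_apply, smul_eq_mul]
          rw [show M * (|q.coeff j| / M * (σf j * ψ x ^ j))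
              = (|q.coeff j| * σf j) * ψ x ^ j * (M / M) by ring,
            div_self hM, mul_one, hσval]
        rw [Finset.sum_congr rfl hterm]
        rw [Polynomial.eval_eq_sum_range' hdeg]
        apply Finset.sum_subset
        · intro j hj
          obtain ⟨h1, h2⟩ := Finset.mem_Icc.mp hj
          exact Finset.mem_range.mpr (Nat.lt_succ_of_le h2)
        · intro j hjr hj
          rcases Nat.eq_zero_or_pos j with h0 | h0
          · subst h0
            rw [Polynomial.coeff_zero_eq_eval_zero, hq0, zero_mul]
          · exact absurd (Finset.mem_Icc.mpr
              ⟨h0, Nat.le_of_lt_succ (Finset.mem_range.mp hjr)⟩) hj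
      rw [hMω, abs_sub_comm]
      exact hqnear (ψ x) (hrange x)
end

section
/- Let 0 ≤ p ≤ 1 and 0 < α ≤ 1. Let K be a finite index set and for each y ∈ K let V_y be a random variable taking the value C_y with probability p and 0 otherwise, where the V_y are independent and each C_y ≤ α. Let S = ∑_{y∈K} V_y, suppose 𝔼S ≤ 3/2, and let T = max(S − 2, 0). Then 𝔼T ≤ 7α e^{−1/(14α)}. -/
open MeasureTheory ProbabilityTheory

theorem exp_le_aux : Real.exp (7/25) ≤ 696/525 := by
  have h2 : (793/800:ℝ) * Real.exp (7/800) ≤ 1 := by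
    have h3 := Real.add_one_le_exp (-(7/800:ℝ))
    have h4 : Real.exp (-(7/800:ℝ)) * Real.exp (7/800) = 1 := by
      rw [← Real.exp_add]; norm_num
    nlinarith [Real.exp_pos (7/800:ℝ)]
  have h1 : Real.exp (7/800) ≤ 800/793 := by linarith [Real.exp_pos (7/800:ℝ)]
  have h5 : Real.exp (7/25) = Real.exp (7/800) ^ (32:ℕ) := by
    rw [← Real.exp_nat_mul]; norm_num
  rw [h5]
  calc Real.exp (7/800) ^ (32:ℕ) ≤ (800/793:ℝ) ^ (32:ℕ) :=
        pow_le_pow_left₀ (Real.exp_nonneg _) h1 32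
    _ ≤ 696/525 := by norm_num

/-- Expected excess over 2 of a sum of independent small Bernoulli-type random
variables: if each `V_y` takes value `C_y ≤ α` with probability `p` and `0`
otherwise, independently, and `𝔼S ≤ 3/2` where `S = ∑ V_y`, then
`𝔼 max(S − 2, 0) ≤ 7α e^{−1/(14α)}`. -/
theorem stmt_15 {Ω : Type*} [MeasurableSpace Ω] (P : Measure Ω)
    [IsProbabilityMeasure P] {K : Type*} [Fintype K]
    (p α : ℝ) (hp0 : 0 ≤ p) (hp1 : p ≤ 1) (hα0 : 0 < α) (hα1 : α ≤ 1)
    (C : K → ℝ) (hC0 : ∀ y, 0 ≤ C y) (hCα : ∀ y, C y ≤ α)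
    (V : K → Ω → ℝ) (hmeas : ∀ y, Measurable (V y))
    (hval : ∀ y ω, V y ω = C y ∨ V y ω = 0)
    (hprob : ∀ y, P {ω | V y ω = C y} = ENNReal.ofReal p)
    (hind : iIndepFun V P)
    (hES : (∫ ω, ∑ y, V y ω ∂P) ≤ 3 / 2) :
    (∫ ω, max ((∑ y, V y ω) - 2) 0 ∂P) ≤ 7 * α * Real.exp (-1 / (14 * α)) := by
  classical
  set lam : ℝ := 7 / (25 * α) with hlam_def
  have hlam : 0 < lam := by positivity
  set S : Ω → ℝ := fun ω => ∑ y, V y ω with hSdef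
  set M : ℝ := ∑ y, C y with hMdef
  have hM0 : 0 ≤ M := Finset.sum_nonneg fun y _ => hC0 y
  have hV0 : ∀ y ω, 0 ≤ V y ω := by
    intro y ω; rcases hval y ω with h | h
    · rw [h]; exact hC0 y
    · rw [h]
  have hVC : ∀ y ω, V y ω ≤ C y := by
    intro y ω; rcases hval y ω with h | h
    · rw [h]
    · rw [h]; exact hC0 y
  have hS0 : ∀ ω, 0 ≤ S ω := fun ω => Finset.sum_nonneg fun y _ => hV0 y ω
  have hSM : ∀ ω, S ω ≤ M := fun ω => Finset.sum_le_sum fun y _ => hVC y ω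
  have hSmeas : Measurable S := Finset.measurable_sum _ fun y _ => hmeas y
  have hA : ∀ y, MeasurableSet {ω | V y ω = C y} := fun y =>
    (hmeas y) (measurableSet_singleton (C y))
  have hPA : ∀ y, (P {ω | V y ω = C y}).toReal = p := fun y => by
    rw [hprob y, ENNReal.toReal_ofReal hp0]
  have hbdd : ∀ (f : Ω → ℝ) (B : ℝ), Measurable f → (∀ ω, ‖f ω‖ ≤ B) → Integrable f P :=
    fun f B hf h => (integrable_const B).mono' hf.aestronglyMeasurable (ae_of_all _ h)
  -- expectation of each V y
  have hEV : ∀ y, ∫ ω, V y ω ∂P = p * C y := by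
    intro y
    have heq : (fun ω => V y ω) =
        fun ω => Set.indicator {ω' | V y ω' = C y} (fun _ => C y) ω := by
      funext ω
      by_cases h : V y ω = C y
      · rw [Set.indicator_of_mem (show ω ∈ {ω' | V y ω' = C y} from h), h]
      · rw [Set.indicator_of_notMem (show ω ∉ {ω' | V y ω' = C y} from h)]
        rcases hval y ω with h' | h'
        · exact absurd h' h
        · exact h'
    rw [heq, integral_indicator_const _ (hA y), measureReal_def, hPA y, smul_eq_mul]
  have hVint : ∀ y, Integrable (V y) P := fun y =>
    hbdd (V y) (C y) (hmeas y) (fun ω => by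
      rw [Real.norm_eq_abs, abs_of_nonneg (hV0 y ω)]; exact hVC y ω)
  have hES' : ∑ y, p * C y ≤ 3 / 2 := by
    have h : (∫ ω, ∑ y, V y ω ∂P) = ∑ y, p * C y := by
      rw [integral_finset_sum _ (fun y _ => hVint y)]
      exact Finset.sum_congr rfl fun y _ => hEV y
    rw [h] at hES
    exact hES
  set d : ℝ := Real.exp (7/25) - 1 with hd_def
  have hd0 : 0 < d := by
    have := Real.add_one_le_exp (7/25:ℝ); rw [hd_def]; linarith
  have hdle : d ≤ 171/525 := by
    have := exp_le_aux; rw [hd_def]; linarith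
  -- mgf bound per variable
  have hmgfy : ∀ y, mgf (V y) P lam ≤ Real.exp (p * C y * d / α) := by
    intro y
    have hcy := hC0 y
    have hcya := hCα y
    have heq : (fun ω => Real.exp (lam * V y ω)) =
        fun ω => Set.indicator {ω' | V y ω' = C y}
          (fun _ => Real.exp (lam * C y) - 1) ω + 1 := by
      funext ω
      by_cases h : V y ω = C y
      · rw [Set.indicator_of_mem (show ω ∈ {ω' | V y ω' = C y} from h), h]; ring
      · rw [Set.indicator_of_notMem (show ω ∉ {ω' | V y ω' = C y} from h)]
        rcases hval y ω with h' | h'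
        · exact absurd h' h
        · rw [h', mul_zero, Real.exp_zero]; norm_num
    have hmgf_eq : mgf (V y) P lam = p * (Real.exp (lam * C y) - 1) + 1 := by
      rw [mgf, heq,
        integral_add ((integrable_const _).indicator (hA y)) (integrable_const 1),
        integral_indicator_const _ (hA y), measureReal_def, hPA y, integral_const]
      simp [smul_eq_mul, mul_comm]
    have hconv : Real.exp (lam * C y) ≤ 1 + (C y / α) * d := by
      have hb0 : (0:ℝ) ≤ C y / α := by positivity
      have hb1 : C y / α ≤ 1 := by rw [div_le_one hα0]; exact hcya
      have h := convexOn_exp.2 (Set.mem_univ (0:ℝ)) (Set.mem_univ (7/25:ℝ))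
        (by linarith : (0:ℝ) ≤ 1 - C y / α) hb0 (by ring)
      have harg : (1 - C y / α) • (0:ℝ) + (C y / α) • (7/25:ℝ) = lam * C y := by
        rw [hlam_def]; simp only [smul_eq_mul]; ring
      rw [harg] at h
      simp only [smul_eq_mul, Real.exp_zero, mul_one] at h
      have h2 : (1 - C y / α) * 1 + (C y / α) * Real.exp (7/25) = 1 + (C y / α) * d := by
        rw [hd_def]; ring
      linarith
    rw [hmgf_eq]
    have h3 : p * (Real.exp (lam * C y) - 1) ≤ p * ((C y / α) * d) := by
      apply mul_le_mul_of_nonneg_left _ hp0; linarith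
    have h4 : p * ((C y / α) * d) = p * C y * d / α := by ring
    have h5 := Real.add_one_le_exp (p * C y * d / α)
    linarith
  -- mgf of sum
  have hsum_mgf : mgf (∑ y, V y) P lam = ∏ y, mgf (V y) P lam :=
    hind.mgf_sum hmeas Finset.univ
  have hprod : ∏ y, mgf (V y) P lam ≤ Real.exp (∑ y, p * C y * d / α) := by
    rw [Real.exp_sum]
    exact Finset.prod_le_prod (fun y _ => mgf_nonneg) (fun y _ => hmgfy y)
  have hsum_le : ∑ y, p * C y * d / α ≤ 3 * d / (2 * α) := by
    have h1 : ∑ y, p * C y * d / α = (∑ y, p * C y) * (d / α) := by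
      rw [Finset.sum_mul]; exact Finset.sum_congr rfl fun y _ => by ring
    rw [h1]
    have h2 : (∑ y, p * C y) * (d / α) ≤ (3/2) * (d / α) :=
      mul_le_mul_of_nonneg_right hES' (by positivity)
    calc (∑ y, p * C y) * (d / α) ≤ (3/2) * (d / α) := h2
      _ = 3 * d / (2 * α) := by ring
  -- integral of exp(lam * S)
  have hmgfS : (∫ ω, Real.exp (lam * S ω) ∂P) = mgf (∑ y, V y) P lam := by
    simp only [mgf, hSdef, Finset.sum_apply]
  have hexpS_le : (∫ ω, Real.exp (lam * S ω) ∂P) ≤ Real.exp (3 * d / (2 * α)) := by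
    rw [hmgfS, hsum_mgf]
    exact hprod.trans (Real.exp_le_exp.mpr hsum_le)
  -- pointwise bound for T
  have hT : ∀ ω, max (S ω - 2) 0 ≤ (1/lam) * Real.exp (lam * S ω - (2 * lam + 1)) := by
    intro ω
    have hx := Real.add_one_le_exp (lam * (S ω - 2) - 1)
    have h1 : lam * (S ω - 2) ≤ Real.exp (lam * S ω - (2 * lam + 1)) := by
      have he : lam * S ω - (2 * lam + 1) = lam * (S ω - 2) - 1 := by ring
      rw [he]; linarith
    rcases le_or_gt (S ω - 2) 0 with h | h
    · rw [max_eq_right h]; positivity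
    · rw [max_eq_left h.le]
      calc S ω - 2 = (1/lam) * (lam * (S ω - 2)) := by field_simp
        _ ≤ (1/lam) * Real.exp (lam * S ω - (2 * lam + 1)) :=
            mul_le_mul_of_nonneg_left h1 (by positivity)
  -- integrability
  have hTint : Integrable (fun ω => max (S ω - 2) 0) P := by
    apply hbdd (fun ω => max (S ω - 2) 0) (M + 2) ((hSmeas.sub measurable_const).max measurable_const)
    intro ω
    rw [Real.norm_eq_abs, abs_le]
    constructor
    · have : (0:ℝ) ≤ max (S ω - 2) 0 := le_max_right _ _
      linarith
    · exact max_le (by linarith [hSM ω]) (by linarith)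
  have hexpint : Integrable (fun ω => Real.exp (lam * S ω - (2 * lam + 1))) P := by
    apply hbdd (fun ω => Real.exp (lam * S ω - (2 * lam + 1))) (Real.exp (lam * M)) (((hSmeas.const_mul lam).sub measurable_const).exp)
    intro ω
    rw [Real.norm_eq_abs, abs_of_pos (Real.exp_pos _)]
    apply Real.exp_le_exp.mpr
    have h := mul_le_mul_of_nonneg_left (hSM ω) hlam.le
    linarith
  -- main chain
  have hmain : (∫ ω, max (S ω - 2) 0 ∂P) ≤
      (1/lam) * (Real.exp (-(2 * lam + 1)) * Real.exp (3 * d / (2 * α))) := by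
    calc (∫ ω, max (S ω - 2) 0 ∂P)
        ≤ ∫ ω, (1/lam) * Real.exp (lam * S ω - (2 * lam + 1)) ∂P :=
          integral_mono hTint (hexpint.const_mul _) hT
      _ = (1/lam) * ∫ ω, Real.exp (lam * S ω - (2 * lam + 1)) ∂P :=
          integral_const_mul _ _
      _ = (1/lam) * (Real.exp (-(2 * lam + 1)) * ∫ ω, Real.exp (lam * S ω) ∂P) := by
          have hfe : (fun ω => Real.exp (lam * S ω - (2 * lam + 1)))
              = fun ω => Real.exp (-(2 * lam + 1)) * Real.exp (lam * S ω) := by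
            funext ω; rw [← Real.exp_add]; ring_nf
          rw [hfe, integral_const_mul]
      _ ≤ (1/lam) * (Real.exp (-(2 * lam + 1)) * Real.exp (3 * d / (2 * α))) := by
          apply mul_le_mul_of_nonneg_left _ (by positivity)
          exact mul_le_mul_of_nonneg_left hexpS_le (Real.exp_pos _).le
  -- final numerics
  have hfin : (1/lam) * (Real.exp (-(2 * lam + 1)) * Real.exp (3 * d / (2 * α)))
      ≤ 7 * α * Real.exp (-1 / (14 * α)) := by
    rw [← Real.exp_add]
    have hexp_arg : -(2 * lam + 1) + 3 * d / (2 * α) ≤ -1 / (14 * α) + (-1) := by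
      rw [hlam_def]
      have key : 3 * d / (2 * α) - 14 / (25 * α) ≤ -1 / (14 * α) := by
        rw [div_sub_div _ _ (by positivity : (2:ℝ) * α ≠ 0) (by positivity : (25:ℝ) * α ≠ 0),
          div_le_div_iff₀ (by positivity) (by positivity)]
        ring_nf
        nlinarith [sq_nonneg α, hα0]
      have : -(2 * (7 / (25 * α)) + 1) + 3 * d / (2 * α)
          = (3 * d / (2 * α) - 14 / (25 * α)) + (-1) := by ring
      rw [this]; linarith
    have h6 : Real.exp (-(2 * lam + 1) + 3 * d / (2 * α))
        ≤ Real.exp (-1 / (14 * α)) * Real.exp (-1) :=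
      (Real.exp_le_exp.mpr hexp_arg).trans_eq (Real.exp_add _ _)
    have h7 : (1/lam) = 25 * α / 7 := by rw [hlam_def]; field_simp
    rw [h7]
    have h8 : Real.exp (-1:ℝ) ≤ 1 := Real.exp_le_one_iff.mpr (by norm_num)
    have h9 : (0:ℝ) < Real.exp (-1 / (14 * α)) := Real.exp_pos _
    calc 25 * α / 7 * Real.exp (-(2 * lam + 1) + 3 * d / (2 * α))
        ≤ 25 * α / 7 * (Real.exp (-1 / (14 * α)) * Real.exp (-1)) :=
          mul_le_mul_of_nonneg_left h6 (by positivity)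
      _ ≤ 25 * α / 7 * (Real.exp (-1 / (14 * α)) * 1) :=
          mul_le_mul_of_nonneg_left (mul_le_mul_of_nonneg_left h8 h9.le) (by positivity)
      _ = 25 * α / 7 * Real.exp (-1 / (14 * α)) := by ring
      _ ≤ 7 * α * Real.exp (-1 / (14 * α)) := by nlinarith [h9, hα0]
  exact hmain.trans hfin
end

section
/- Let X be a finite set, let S be a homogeneous collection of ordered k-tuples in X that has two degrees of freedom, and let U₁, …, U_k be independent random subsets of X each chosen with probability p, with associated measures μ₁, …, μ_k. Fix 1 ≤ j ≤ k, a subset L ⊆ {1,…,k}∖{j} of size l < k−1, and set ν_i = μ_i for i ∈ L and ν_i = 1 otherwise. Then for each x ∈ X, ℙ( *_j(ν₁,…,ν_{j−1},ν_{j+1},…,ν_k)(x) ≤ 3/2 ) ≥ 1 − 2 exp(−p^l |S_j(x)|/16). -/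
open MeasureTheory ProbabilityTheory
open scoped ENNReal

open Classical in
/-- Convolution bound for homogeneous systems with two degrees of freedom: with
probability at least `1 − 2exp(−p^l|S_j(x)|/16)`, the convolution
`*_j(ν₁,…,ν_{j−1},ν_{j+1},…,ν_k)(x)` is at most `3/2`, where `ν_i = μ_i` for
`i ∈ L` and `ν_i = 1` otherwise. -/
theorem stmt_16 {X : Type*} [Fintype X] [DecidableEq X]
    {Ω : Type*} [MeasurableSpace Ω]
    (P : Measure Ω) [IsProbabilityMeasure P]
    (k : ℕ) (S : Finset (Fin k → X))
    (hhom : ∀ j : Fin k, ∀ x y : X,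
      (S.filter fun s => s j = x).card = (S.filter fun s => s j = y).card)
    (htdf : ∀ s ∈ S, ∀ t ∈ S, ∀ i j : Fin k, i ≠ j → s i = t i → s j = t j → s = t)
    (p : ℝ) (hp0 : 0 < p) (hp1 : p ≤ 1)
    (U : Fin k → Ω → Set X)
    (hmeas : ∀ (i : Fin k) (x : X), MeasurableSet {ω | x ∈ U i ω})
    (hind : iIndepSet (fun ix : Fin k × X => {ω | ix.2 ∈ U ix.1 ω}) P)
    (hprob : ∀ (i : Fin k) (x : X), P {ω | x ∈ U i ω} = ENNReal.ofReal p)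
    (j : Fin k) (L : Finset (Fin k)) (hjL : j ∉ L) (hL : L.card + 1 < k)
    (x : X) :
    1 - ENNReal.ofReal (2 * Real.exp
          (-(p ^ L.card * ((S.filter fun s => s j = x).card : ℝ)) / 16))
      ≤ P {ω |
          (∑ s ∈ S.filter fun s => s j = x,
              ∏ i ∈ Finset.univ.erase j,
                (if i ∈ L then (if s i ∈ U i ω then p⁻¹ else 0) else 1))
            / ((S.filter fun s => s j = x).card : ℝ) ≤ 3 / 2} := by
  classical
  set F : Finset (Fin k → X) := S.filter fun s => s j = x with hFdef
  set n : ℕ := F.card with hndef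
  set l : ℕ := L.card with hldef
  set q : ℝ := p ^ l with hqdef
  have hq0 : 0 < q := pow_pos hp0 l
  set A : Fin k × X → Set Ω := fun ix => {ω | ix.2 ∈ U ix.1 ω} with hAdef
  have hAmeas : ∀ ix, MeasurableSet (A ix) := fun ix => hmeas ix.1 ix.2
  set B : (Fin k → X) → Set Ω := fun s => ⋂ i ∈ L, A (i, s i) with hBdef
  have hBmeas : ∀ s, MeasurableSet (B s) :=
    fun s => MeasurableSet.biInter L.countable_toSet fun i _ => hAmeas (i, s i)
  set G : Ω → ℝ≥0∞ :=
    fun ω => ∏ s ∈ F, (1 + ENNReal.ofReal (1/2) * (B s).indicator 1 ω) with hGdef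
  have hGmeas : Measurable G := Finset.measurable_prod _ fun s _ =>
    ((measurable_one.indicator (hBmeas s)).const_mul _).const_add _
  -- membership agree at one non-j coordinate forces equality on F
  have hmemF : ∀ s ∈ F, ∀ t ∈ F, ∀ i ∈ L, s i = t i → s = t := by
    intro s hs t ht i hi hst
    have hs' := Finset.mem_filter.mp hs
    have ht' := Finset.mem_filter.mp ht
    exact htdf s hs'.1 t ht'.1 i j (fun h => hjL (h ▸ hi)) hst
      (hs'.2.trans ht'.2.symm)
  -- measure of intersections
  have hInter : ∀ T : Finset (Fin k → X), T ⊆ F →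
      P (⋂ s ∈ T, B s) = (ENNReal.ofReal p) ^ (l * T.card) := by
    intro T hT
    have hset : (⋂ s ∈ T, B s)
        = ⋂ ix ∈ ((T ×ˢ L).image fun sl : (Fin k → X) × Fin k => (sl.2, sl.1 sl.2)),
            A ix := by
      ext ω
      simp only [Set.mem_iInter, hBdef, Finset.mem_image, Finset.mem_product, Prod.exists]
      constructor
      · rintro h ix ⟨s, i, ⟨hsT, hiL⟩, rfl⟩
        exact h s hsT i hiL
      · intro h s hsT i hiL
        exact h (i, s i) ⟨s, i, ⟨hsT, hiL⟩, rfl⟩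
    have hcard : ((T ×ˢ L).image fun sl : (Fin k → X) × Fin k => (sl.2, sl.1 sl.2)).card
        = T.card * l := by
      rw [Finset.card_image_of_injOn, Finset.card_product]
      rintro ⟨s, i⟩ hsi ⟨t, i'⟩ hti h
      simp only [Finset.mem_coe, Finset.mem_product] at hsi hti
      obtain ⟨h1, h2⟩ := Prod.mk.injEq _ _ _ _ ▸ h
      subst h1
      have : s = t := hmemF s (hT hsi.1) t (hT hti.1) i hsi.2 h2
      subst this; rfl
    calc P (⋂ s ∈ T, B s)
        = ∏ ix ∈ (T ×ˢ L).image (fun sl : (Fin k → X) × Fin k => (sl.2, sl.1 sl.2)),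
            P (A ix) := by
          rw [hset]; exact (iIndepSet_iff_meas_biInter hAmeas).mp hind _
      _ = ∏ ix ∈ (T ×ˢ L).image (fun sl : (Fin k → X) × Fin k => (sl.2, sl.1 sl.2)),
            ENNReal.ofReal p := Finset.prod_congr rfl fun ix _ => hprob ix.1 ix.2
      _ = (ENNReal.ofReal p) ^ (l * T.card) := by
          rw [Finset.prod_const, hcard, mul_comm]
  -- expansion of G
  have hGeq : ∀ ω, G ω = ∑ T ∈ F.powerset,
      ENNReal.ofReal (1/2) ^ T.card * (⋂ s ∈ T, B s).indicator 1 ω := by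
    intro ω
    have hfac : ∀ s ∈ F, (1 + ENNReal.ofReal (1/2) * (B s).indicator 1 ω)
        = ENNReal.ofReal (1/2) * (B s).indicator 1 ω + 1 := fun s _ => add_comm _ _
    simp only [hGdef]
    rw [Finset.prod_congr rfl hfac, Finset.prod_add]
    refine Finset.sum_congr rfl fun T hT => ?_
    rw [Finset.prod_const_one, mul_one, Finset.prod_mul_distrib, Finset.prod_const]
    congr 1
    by_cases h : ω ∈ ⋂ s ∈ T, B s
    · rw [Set.indicator_of_mem h]
      have hone : ∀ s ∈ T, (B s).indicator (1 : Ω → ℝ≥0∞) ω = 1 := fun s hs =>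
        Set.indicator_of_mem (Set.mem_iInter₂.mp h s hs) _
      rw [Finset.prod_congr rfl hone, Finset.prod_const_one, Pi.one_apply]
    · rw [Set.indicator_of_notMem h]
      obtain ⟨s, hsT, hs⟩ : ∃ s ∈ T, ω ∉ B s := by
        by_contra hc
        push_neg at hc
        exact h (Set.mem_iInter₂.mpr hc)
      exact Finset.prod_eq_zero hsT (Set.indicator_of_notMem hs _)
  -- the lintegral of G
  have hI : ∫⁻ ω, G ω ∂P = ENNReal.ofReal ((1 + q/2) ^ n) := by
    have hTmeas : ∀ T : Finset (Fin k → X), MeasurableSet (⋂ s ∈ T, B s) :=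
      fun T => MeasurableSet.biInter T.countable_toSet fun s _ => hBmeas s
    calc ∫⁻ ω, G ω ∂P
        = ∑ T ∈ F.powerset, ∫⁻ ω,
            ENNReal.ofReal (1/2) ^ T.card * (⋂ s ∈ T, B s).indicator 1 ω ∂P := by
          simp_rw [hGeq]
          exact lintegral_finset_sum _ fun T _ =>
            (measurable_one.indicator (hTmeas T)).const_mul _
      _ = ∑ T ∈ F.powerset, ENNReal.ofReal (1/2) ^ T.card * P (⋂ s ∈ T, B s) := by
          refine Finset.sum_congr rfl fun T _ => ?_
          rw [lintegral_const_mul _ (measurable_one.indicator (hTmeas T)),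
            lintegral_indicator_one (hTmeas T)]
      _ = ∑ T ∈ F.powerset, (∏ s ∈ T, ENNReal.ofReal (q/2)) * ∏ s ∈ F \ T, 1 := by
          refine Finset.sum_congr rfl fun T hT => ?_
          rw [hInter T (Finset.mem_powerset.mp hT), Finset.prod_const_one, mul_one,
            Finset.prod_const, pow_mul, ← mul_pow]
          congr 1
          rw [← ENNReal.ofReal_pow hp0.le, ← ENNReal.ofReal_mul (by norm_num), hqdef]
          congr 1
          ring
      _ = ∏ s ∈ F, (ENNReal.ofReal (q/2) + 1) := (Finset.prod_add _ _ _).symm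
      _ = ENNReal.ofReal ((1 + q/2) ^ n) := by
          rw [Finset.prod_const, ← ENNReal.ofReal_one, ← ENNReal.ofReal_add (by positivity)
            (by norm_num), ← ENNReal.ofReal_pow (by positivity), add_comm]
  set a : ℝ := 3/2 * (q * n) with hadef
  set ε : ℝ≥0∞ := ENNReal.ofReal ((3/2 : ℝ) ^ a) with hεdef
  have hε0 : ε ≠ 0 :=
    (ENNReal.ofReal_pos.mpr (Real.rpow_pos_of_pos (by norm_num) _)).ne'
  have hεtop : ε ≠ ⊤ := ENNReal.ofReal_ne_top
  -- the complement event is contained in {ε ≤ G}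
  have hsubset : {ω | ¬ ((∑ s ∈ F, ∏ i ∈ Finset.univ.erase j,
        (if i ∈ L then (if s i ∈ U i ω then p⁻¹ else 0) else 1)) / (n : ℝ) ≤ 3/2)}
      ⊆ {ω | ε ≤ G ω} := by
    intro ω hω
    simp only [Set.mem_setOf_eq] at hω ⊢
    have hLsub : Finset.univ.erase j ∩ L = L := by
      apply Finset.inter_eq_right.mpr
      intro i hi
      exact Finset.mem_erase.mpr ⟨fun h => hjL (h ▸ hi), Finset.mem_univ i⟩
    have hs : ∀ s ∈ F, (∏ i ∈ Finset.univ.erase j,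
        (if i ∈ L then (if s i ∈ U i ω then p⁻¹ else 0) else 1))
        = (p⁻¹) ^ l * (if ω ∈ B s then (1:ℝ) else 0) := by
      intro s _
      rw [Finset.prod_ite_mem, hLsub]
      have hstep : ∀ i ∈ L, (if s i ∈ U i ω then p⁻¹ else 0)
          = p⁻¹ * (if s i ∈ U i ω then (1:ℝ) else 0) := by
        intro i _; split <;> simp
      rw [Finset.prod_congr rfl hstep, Finset.prod_mul_distrib, Finset.prod_const]
      congr 1
      by_cases h : ω ∈ B s
      · rw [if_pos h]
        have h' : ∀ i ∈ L, s i ∈ U i ω := by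
          intro i hi
          have := Set.mem_iInter₂.mp (show ω ∈ ⋂ i ∈ L, A (i, s i) from h) i hi
          simpa [hAdef] using this
        exact Finset.prod_eq_one fun i hi => if_pos (h' i hi)
      · rw [if_neg h]
        obtain ⟨i, hiL, hi⟩ : ∃ i ∈ L, s i ∉ U i ω := by
          by_contra hc
          push_neg at hc
          refine h (Set.mem_iInter₂.mpr fun i hi => ?_)
          simpa [hAdef] using hc i hi
        exact Finset.prod_eq_zero hiL (if_neg hi)
    rw [Finset.sum_congr rfl hs, ← Finset.mul_sum, Finset.sum_boole] at hω
    set m : ℕ := (F.filter fun s => ω ∈ B s).card with hmdef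
    push_neg at hω
    have hmn : m ≤ n := Finset.card_filter_le _ _
    have hn0 : 0 < (n : ℝ) := by
      rcases Nat.eq_zero_or_pos n with h | h
      · exfalso
        have hm0 : m = 0 := by omega
        rw [h, hm0] at hω
        norm_num at hω
      · exact_mod_cast h
    have ham : a < m := by
      have h1 : (3/2 : ℝ) * (n:ℝ) < (p⁻¹) ^ l * (m:ℝ) := (lt_div_iff₀ hn0).mp hω
      have hq : q * (p⁻¹) ^ l = 1 := by
        rw [hqdef, ← mul_pow, mul_inv_cancel₀ hp0.ne', one_pow]
      have h2 := mul_lt_mul_of_pos_left h1 hq0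
      rw [hadef]
      nlinarith [h2, hq]
    have hGω : G ω = ENNReal.ofReal (3/2) ^ m := by
      simp only [hGdef]
      have hfac : ∀ s ∈ F, (1 + ENNReal.ofReal (1/2) * (B s).indicator 1 ω)
          = if ω ∈ B s then ENNReal.ofReal (3/2) else 1 := by
        intro s _
        rw [Set.indicator_apply]
        split
        · rw [Pi.one_apply, mul_one, ← ENNReal.ofReal_one,
            ← ENNReal.ofReal_add (by norm_num) (by norm_num)]
          norm_num
        · rw [mul_zero, add_zero]
      rw [Finset.prod_congr rfl hfac, Finset.prod_ite, Finset.prod_const,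
        Finset.prod_const, one_pow, mul_one]
    calc ε ≤ ENNReal.ofReal ((3/2 : ℝ) ^ (m : ℝ)) := by
          exact ENNReal.ofReal_le_ofReal
            (Real.rpow_le_rpow_of_exponent_le (by norm_num) ham.le)
      _ = ENNReal.ofReal (3/2) ^ m := by
          rw [Real.rpow_natCast, ENNReal.ofReal_pow (by norm_num)]
      _ = G ω := hGω.symm
  -- Chernoff numeric bound
  have hbad : P {ω | ¬ ((∑ s ∈ F, ∏ i ∈ Finset.univ.erase j,
        (if i ∈ L then (if s i ∈ U i ω then p⁻¹ else 0) else 1)) / (n : ℝ) ≤ 3/2)}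
      ≤ ENNReal.ofReal (2 * Real.exp (-(q * n) / 16)) := by
    refine (measure_mono hsubset).trans ?_
    have hmarkov := mul_meas_ge_le_lintegral₀ (μ := P) hGmeas.aemeasurable ε
    have h1 : P {ω | ε ≤ G ω} ≤ (∫⁻ ω, G ω ∂P) / ε := by
      rw [ENNReal.le_div_iff_mul_le (Or.inl hε0) (Or.inl hεtop), mul_comm]
      exact hmarkov
    refine h1.trans ?_
    rw [hI]
    refine ENNReal.div_le_of_le_mul ?_
    rw [hεdef, ← ENNReal.ofReal_mul (by positivity)]
    refine ENNReal.ofReal_le_ofReal ?_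
    have hlog : (3/8 : ℝ) ≤ Real.log (3/2) := by
      rw [Real.le_log_iff_exp_le (by norm_num)]
      have h8 : Real.exp (3/8) ^ (8:ℕ) = Real.exp 1 ^ (3:ℕ) := by
        rw [← Real.exp_nat_mul, ← Real.exp_nat_mul]; norm_num
      have he : Real.exp 1 ^ (3:ℕ) ≤ (3/2 : ℝ) ^ (8:ℕ) := by
        have h9 : Real.exp 1 ^ (3:ℕ) < (2.7182818286 : ℝ) ^ (3:ℕ) :=
          pow_lt_pow_left₀ Real.exp_one_lt_d9 (Real.exp_pos 1).le (by norm_num)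
        have h10 : ((2.7182818286 : ℝ)) ^ (3:ℕ) ≤ (3/2 : ℝ) ^ (8:ℕ) := by norm_num
        linarith
      refine le_of_pow_le_pow_left₀ (n := 8) (by norm_num) (by norm_num) ?_
      rw [h8]; exact he
    have hrw : ((3/2 : ℝ) ^ a) = Real.exp (Real.log (3/2) * a) :=
      Real.rpow_def_of_pos (by norm_num) a
    have h2 : (1 + q/2 : ℝ) ^ n ≤ Real.exp (q * n / 2) := by
      have hle := Real.add_one_le_exp (q/2)
      calc (1 + q/2 : ℝ) ^ n ≤ (Real.exp (q/2)) ^ n :=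
            pow_le_pow_left₀ (by positivity) (by linarith) n
        _ = Real.exp ((n : ℝ) * (q/2)) := (Real.exp_nat_mul _ n).symm
        _ = Real.exp (q * n / 2) := by ring_nf
    refine h2.trans ?_
    rw [hrw, mul_assoc, ← Real.exp_add]
    have hqn0 : (0:ℝ) ≤ q * n := by positivity
    have h3 : q * (n:ℝ) / 2 ≤ -(q * n) / 16 + Real.log (3/2) * a := by
      rw [hadef]
      nlinarith [mul_le_mul_of_nonneg_left hlog hqn0]
    calc Real.exp (q * n / 2) ≤ Real.exp (-(q * n) / 16 + Real.log (3/2) * a) :=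
          Real.exp_le_exp.mpr h3
      _ ≤ 2 * Real.exp (-(q * n) / 16 + Real.log (3/2) * a) := by
          nlinarith [Real.exp_pos (-(q * n) / 16 + Real.log (3/2) * a)]
  -- assemble
  set E : Set Ω := {ω | (∑ s ∈ F, ∏ i ∈ Finset.univ.erase j,
      (if i ∈ L then (if s i ∈ U i ω then p⁻¹ else 0) else 1)) / (n : ℝ) ≤ 3/2}
    with hEdef
  set Bad : Set Ω := {ω | ¬ ((∑ s ∈ F, ∏ i ∈ Finset.univ.erase j,
      (if i ∈ L then (if s i ∈ U i ω then p⁻¹ else 0) else 1)) / (n : ℝ) ≤ 3/2)}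
    with hBadDef
  have hBadc : Bad = Eᶜ := by
    rw [hBadDef, hEdef, ← Set.compl_setOf]
  have hunion : (1 : ℝ≥0∞) ≤ P E + P Bad := by
    rw [hBadc]
    calc (1 : ℝ≥0∞) = P Set.univ := measure_univ.symm
      _ = P (E ∪ Eᶜ) := by rw [Set.union_compl_self]
      _ ≤ P E + P Eᶜ := measure_union_le _ _
  calc 1 - ENNReal.ofReal (2 * Real.exp (-(q * ↑n) / 16))
      ≤ 1 - P Bad := tsub_le_tsub_left hbad 1
    _ ≤ P E := tsub_le_iff_right.mpr hunion
end
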